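/- Let λ > 0, ε > 0, |A| ≥ 2, and β > 2|S|/(ε(1 − γ)²). Let V∞, π∞, (V*_λ, π*_λ), (V*, π*) be as follows: q∞(s,a) = r(s,a) + γ Σ_t P^a_{st} V∞_t and π∞(s,a) = exp(q∞(s,a)/λ)/Σ_b exp(q∞(s,b)/λ); there exists u : S → ℝ with (I − γP^{π∞})ᵀu = 𝟙 and (I − γP^{π∞})V∞ = r^{π∞} − λH(π∞) + (1/β)u; (I − γP^{π*_λ})V*_λ + λH(π*_λ) = r^{π*_λ} and for every policy μ, (r^{π*_λ} + γP^{π*_λ}V*_λ − λH(π*_λ))_s ≥ (r^μ + γP^μV*_λ − λH(μ))_s for all s; (I − γP^{π*})V* = r^{π*} and, with V^π the solution of (I − γP^π)V^π = r^π, V*_s ≥ V^π_s for every policy π and every s. Assume further that for each s the map a ↦ q*(s,a) = r(s,a) + γ Σ_t P^a_{st} V*_t has a unique maximizer a*_s, that g = min_s (q*(s,a*_s) − max_{a≠a*_s} q*(s,a)) > 0, and that ε < g/3 and λ < ε(1 − γ)/(2 log|A|). Then for every s ∈ S, a*_s is the unique maximizer of a ↦ r(s,a) + γ Σ_t P^a_{st}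 V∞_t; i.e., r(s,a*_s) + γ Σ_t P^{a*_s}_{st} V∞_t > r(s,a) + γ Σ_t P^a_{st} V∞_t for all a ≠ a*_s. -/

import Mathlib

lemma gibbs19 {A : Type*} [Fintype A] [Nonempty A] (q μ : A → ℝ) (lam : ℝ) (hlam : 0 < lam)
    (hμ0 : ∀ a, 0 ≤ μ a) (hμ1 : ∑ a, μ a = 1) :
    ∑ a, μ a * q a - lam * ∑ a, μ a * Real.log (μ a)
      ≤ lam * Real.log (∑ a, Real.exp (q a / lam)) := by
  set Z := ∑ a, Real.exp (q a / lam) with hZ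
  have hZpos : 0 < Z := Finset.sum_pos (fun a _ => Real.exp_pos _) Finset.univ_nonempty
  have key : ∀ a, μ a * (q a / lam) - μ a * Real.log (μ a) - μ a * Real.log Z
      ≤ Real.exp (q a / lam) / Z - μ a := by
    intro a
    rcases eq_or_lt_of_le (hμ0 a) with h | h
    · rw [← h]
      simp
      positivity
    · have hx : 0 < Real.exp (q a / lam) / (μ a * Z) := by positivity
      have hlog := Real.log_le_sub_one_of_pos hx
      have hl : Real.log (Real.exp (q a / lam) / (μ a * Z))
          = q a / lam - Real.log (μ a) - Real.log Z := by
        rw [Real.log_div (Real.exp_ne_zero _) (by positivity), Real.log_exp,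
          Real.log_mul (ne_of_gt h) (ne_of_gt hZpos)]
        ring
      rw [hl] at hlog
      have h2 : μ a * (q a / lam - Real.log (μ a) - Real.log Z)
          ≤ μ a * (Real.exp (q a / lam) / (μ a * Z) - 1) :=
        mul_le_mul_of_nonneg_left hlog (le_of_lt h)
      have h3 : μ a * (Real.exp (q a / lam) / (μ a * Z) - 1)
          = Real.exp (q a / lam) / Z - μ a := by
        field_simp
      nlinarith [h2, h3]
  have hsum := Finset.sum_le_sum (fun a (_ : a ∈ Finset.univ) => key a)
  rw [Finset.sum_sub_distrib, Finset.sum_sub_distrib, Finset.sum_sub_distrib] at hsum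
  rw [← Finset.sum_mul, hμ1, ← Finset.sum_div, ← hZ, div_self (ne_of_gt hZpos)] at hsum
  have e1 : ∑ a, μ a * (q a / lam) = (∑ a, μ a * q a) / lam := by
    rw [Finset.sum_div]
    exact Finset.sum_congr rfl (fun a _ => by ring)
  rw [e1] at hsum
  have := mul_le_mul_of_nonneg_left hsum (le_of_lt hlam)
  have hc : lam * ((∑ a, μ a * q a) / lam) = ∑ a, μ a * q a := by field_simp
  nlinarith [this, hc]

lemma entropy_lb19 {A : Type*} [Fintype A] [Nonempty A] (μ : A → ℝ)
    (hμ0 : ∀ a, 0 ≤ μ a) (hμ1 : ∑ a, μ a = 1) :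
    -Real.log (Fintype.card A) ≤ ∑ a, μ a * Real.log (μ a) := by
  have := gibbs19 (fun _ => 0) μ 1 one_pos hμ0 hμ1
  simp at this
  linarith

lemma entropy_ub19 {A : Type*} [Fintype A] (μ : A → ℝ)
    (hμ0 : ∀ a, 0 ≤ μ a) (hμ1 : ∑ a, μ a = 1) :
    ∑ a, μ a * Real.log (μ a) ≤ 0 := by
  apply Finset.sum_nonpos
  intro a _
  rcases eq_or_lt_of_le (hμ0 a) with h | h
  · rw [← h]; simp
  · have hle : μ a ≤ 1 := by
      rw [← hμ1]
      exact Finset.single_le_sum (fun b _ => hμ0 b) (Finset.mem_univ a)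
    exact mul_nonpos_of_nonneg_of_nonpos (le_of_lt h) (Real.log_nonpos (le_of_lt h) hle)

lemma contract19 {S : Type*} [Fintype S] [Nonempty S] (p : S → S → ℝ)
    (hp0 : ∀ s t, 0 ≤ p s t) (hp1 : ∀ s, ∑ t, p s t = 1)
    (γ : ℝ) (hγ0 : 0 ≤ γ) (hγ1 : γ < 1) (D : S → ℝ) (c : ℝ)
    (h : ∀ s, D s ≤ γ * (∑ t, p s t * D t) + c) :
    ∀ s, D s ≤ c / (1 - γ) := by
  obtain ⟨s0, -, hs0⟩ := Finset.exists_max_image Finset.univ D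
    ⟨Classical.arbitrary S, Finset.mem_univ _⟩
  have hb : ∀ s, D s ≤ D s0 := fun s => hs0 s (Finset.mem_univ s)
  have h1 : ∑ t, p s0 t * D t ≤ D s0 := by
    calc ∑ t, p s0 t * D t ≤ ∑ t, p s0 t * D s0 :=
          Finset.sum_le_sum (fun t _ => mul_le_mul_of_nonneg_left (hb t) (hp0 s0 t))
    _ = D s0 := by rw [← Finset.sum_mul, hp1]; ring
  have h2 := h s0
  have hM : D s0 ≤ c / (1 - γ) := by
    rw [le_div_iff₀ (by linarith)]
    nlinarith [h2, h1]
  exact fun s => le_trans (hb s) hM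

lemma exists_value19 {S : Type*} [Fintype S] [Nonempty S] (p : S → S → ℝ)
    (hp0 : ∀ s t, 0 ≤ p s t) (hp1 : ∀ s, ∑ t, p s t = 1)
    (γ : ℝ) (hγ0 : 0 ≤ γ) (hγ1 : γ < 1) (R : S → ℝ) :
    ∃ W : S → ℝ, ∀ s, W s = R s + γ * ∑ t, p s t * W t := by
  let L : (S → ℝ) →ₗ[ℝ] (S → ℝ) :=
    { toFun := fun W s => W s - γ * ∑ t, p s t * W t
      map_add' := by
        intro W W'
        funext s
        simp only [Pi.add_apply, mul_add, Finset.sum_add_distrib]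
        ring
      map_smul' := by
        intro c W
        funext s
        simp only [Pi.smul_apply, smul_eq_mul, RingHom.id_apply]
        have h : ∑ t, p s t * (c * W t) = c * ∑ t, p s t * W t := by
          rw [Finset.mul_sum]
          exact Finset.sum_congr rfl (fun t _ => by ring)
        rw [h]
        ring }
  have hinj : Function.Injective L := by
    rw [injective_iff_map_eq_zero]
    intro W hW
    have hW' : ∀ s, W s = γ * ∑ t, p s t * W t := by
      intro s
      have := congrFun hW s
      simp only [L, LinearMap.coe_mk, AddHom.coe_mk, Pi.zero_apply] at this
      linarith
    have h1 : ∀ s, W s ≤ 0 := by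
      have := contract19 p hp0 hp1 γ hγ0 hγ1 W 0 (fun s => by rw [hW' s]; simp)
      simpa using this
    have h2 : ∀ s, -W s ≤ 0 := by
      have hc := contract19 p hp0 hp1 γ hγ0 hγ1 (fun s => -W s) 0 (fun s => by
        show -W s ≤ γ * ∑ t, p s t * (fun s => -W s) t + 0
        have h : ∑ t, p s t * (fun s => -W s) t = -∑ t, p s t * W t := by
          rw [← Finset.sum_neg_distrib]
          exact Finset.sum_congr rfl (fun t _ => by ring)
        rw [h]
        nlinarith [hW' s])
      intro s
      simpa using hc s
    funext s
    have := h2 s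
    simp only [Pi.zero_apply]
    linarith [h1 s]
  have hsurj : Function.Surjective L := (LinearMap.injective_iff_surjective).mp hinj
  obtain ⟨W, hWR⟩ := hsurj R
  refine ⟨W, fun s => ?_⟩
  have := congrFun hWR s
  simp only [L, LinearMap.coe_mk, AddHom.coe_mk] at this
  linarith


lemma sumsub19 {S : Type*} [Fintype S] (p f g : S → ℝ) :
    (∑ t, p t * f t) - ∑ t, p t * g t = ∑ t, p t * (f t - g t) := by
  rw [← Finset.sum_sub_distrib]
  exact Finset.sum_congr rfl fun t _ => by ring

lemma qsum19 {S A : Type*} [Fintype S] [Fintype A] (P : A → S → S → ℝ) (μ : A → ℝ)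
    (r : A → ℝ) (V : S → ℝ) (γ : ℝ) (s : S) :
    ∑ a, μ a * (r a + γ * ∑ t, P a s t * V t)
      = (∑ a, μ a * r a) + γ * ∑ t, (∑ a, μ a * P a s t) * V t := by
  have h1 : ∀ a, μ a * (r a + γ * ∑ t, P a s t * V t)
      = μ a * r a + ∑ t, γ * (μ a * P a s t * V t) := by
    intro a
    have h : γ * ∑ t, P a s t * V t = ∑ t, γ * (P a s t * V t) := Finset.mul_sum _ _ _
    rw [mul_add, h, Finset.mul_sum]
    congr 1
    exact Finset.sum_congr rfl fun t _ => by ring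
  rw [Finset.sum_congr rfl fun a _ => h1 a, Finset.sum_add_distrib, Finset.sum_comm]
  congr 1
  have h2 : ∀ t, (∑ a, γ * (μ a * P a s t * V t)) = γ * ((∑ a, μ a * P a s t) * V t) := by
    intro t
    rw [Finset.sum_mul, Finset.mul_sum]
  rw [Finset.sum_congr rfl fun t _ => h2 t]
  rw [Finset.mul_sum]

set_option maxHeartbeats 1000000 in
/-- Under `β > 2|S|/(ε(1-γ)²)`, `ε < g/3` and `λ < ε(1-γ)/(2 log|A|)`, the
greedy action of the fixed point `V∞` coincides with the unregularized optimal action `a*_s`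
at every state. -/
theorem stmt19 {S A : Type*} [Fintype S] [Nonempty S] [Fintype A] [Nonempty A] [DecidableEq A]
    (P : A → S → S → ℝ) (hP0 : ∀ a s t, 0 ≤ P a s t) (hP1 : ∀ a s, ∑ t, P a s t = 1)
    (r : S → A → ℝ) (γ : ℝ) (hγ0 : 0 < γ) (hγ1 : γ < 1)
    (hA : 2 ≤ Fintype.card A)
    (lam β ε : ℝ) (hlam : 0 < lam) (hε : 0 < ε)
    (hβ : 2 * (Fintype.card S : ℝ) / (ε * (1 - γ) ^ 2) < β)
    (Vinf : S → ℝ) (qinf : S → A → ℝ)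
    (hqinf : ∀ s a, qinf s a = r s a + γ * ∑ t, P a s t * Vinf t)
    (πinf : S → A → ℝ)
    (hπinf : ∀ s a, πinf s a = Real.exp (qinf s a / lam) / ∑ b, Real.exp (qinf s b / lam))
    -- uniform-distribution critic fixed-point equation for π∞
    (hfix : ∃ u : S → ℝ,
      (∀ s, u s - γ * ∑ t, (∑ a, πinf t a * P a t s) * u t = 1) ∧
      (∀ s, Vinf s - γ * ∑ t, (∑ a, πinf s a * P a s t) * Vinf t
        = (∑ a, πinf s a * r s a) - lam * (∑ a, πinf s a * Real.log (πinf s a)) + (1 / β) * u s))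
    (Vsl : S → ℝ) (πsl : S → A → ℝ)
    (hπsl0 : ∀ s a, 0 ≤ πsl s a) (hπsl1 : ∀ s, ∑ a, πsl s a = 1)
    -- regularized Bellman equation for (V*_λ, π*_λ)
    (hbellSl : ∀ s, Vsl s - γ * ∑ t, (∑ a, πsl s a * P a s t) * Vsl t
        + lam * ∑ a, πsl s a * Real.log (πsl s a) = ∑ a, πsl s a * r s a)
    -- π*_λ is regularized-greedy for V*_λ
    (hoptSl : ∀ μ : S → A → ℝ, (∀ s a, 0 ≤ μ s a) → (∀ s, ∑ a, μ s a = 1) → ∀ s,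
      (∑ a, μ s a * r s a) + γ * ∑ t, (∑ a, μ s a * P a s t) * Vsl t
          - lam * ∑ a, μ s a * Real.log (μ s a)
        ≤ (∑ a, πsl s a * r s a) + γ * ∑ t, (∑ a, πsl s a * P a s t) * Vsl t
          - lam * ∑ a, πsl s a * Real.log (πsl s a))
    (Vstar : S → ℝ) (πstar : S → A → ℝ)
    (hπstar0 : ∀ s a, 0 ≤ πstar s a) (hπstar1 : ∀ s, ∑ a, πstar s a = 1)
    -- Bellman equation for (V*, π*)
    (hbellStar : ∀ s, Vstar s - γ * ∑ t, (∑ a, πstar s a * P a s t) * Vstar t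
        = ∑ a, πstar s a * r s a)
    -- π* is optimal for the unregularized problem: V* ≥ V^π for every policy π
    (hoptStar : ∀ π : S → A → ℝ, (∀ s a, 0 ≤ π s a) → (∀ s, ∑ a, π s a = 1) →
      ∀ W : S → ℝ, (∀ s, W s - γ * ∑ t, (∑ a, π s a * P a s t) * W t = ∑ a, π s a * r s a) →
      ∀ s, W s ≤ Vstar s)
    (qstar : S → A → ℝ)
    (hqstar : ∀ s a, qstar s a = r s a + γ * ∑ t, P a s t * Vstar t)
    (astar : S → A)
    (hastar : ∀ s a, a ≠ astar s → qstar s a < qstar s (astar s))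
    (g : ℝ)
    (hg : g = Finset.univ.inf' Finset.univ_nonempty (fun s =>
        qstar s (astar s) - (Finset.univ.erase (astar s)).sup'
          ((Finset.erase_nonempty (Finset.mem_univ _)).mpr
            (Finset.one_lt_card_iff_nontrivial.mp (by rw [Finset.card_univ]; omega)))
          (qstar s)))
    (hgpos : 0 < g)
    (hεg : ε < g / 3)
    (hlamSmall : lam < ε * (1 - γ) / (2 * Real.log (Fintype.card A))) :
    ∀ s a, a ≠ astar s →
      r s a + γ * ∑ t, P a s t * Vinf t
        < r s (astar s) + γ * ∑ t, P (astar s) s t * Vinf t := by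
  classical
  obtain ⟨u, hu1, hu2⟩ := hfix
  have h1γ : 0 < 1 - γ := by linarith
  have hcardS : (1:ℝ) ≤ (Fintype.card S : ℝ) := by exact_mod_cast Fintype.card_pos
  have hd : 0 < ε * (1 - γ)^2 := by positivity
  have hβpos : 0 < β := lt_trans (by positivity) hβ
  have hcardA : (2:ℝ) ≤ (Fintype.card A : ℝ) := by exact_mod_cast hA
  set L := Real.log (Fintype.card A) with hLdef
  have hL : 0 < L := Real.log_pos (by linarith)
  set Z : S → ℝ := fun s => ∑ b, Real.exp (qinf s b / lam) with hZdef
  have hZpos : ∀ s, 0 < Z s :=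
    fun s => Finset.sum_pos (fun b _ => Real.exp_pos _) Finset.univ_nonempty
  have hπ0 : ∀ s a, 0 ≤ πinf s a := by
    intro s a
    rw [hπinf]
    positivity
  have hπ1 : ∀ s, ∑ a, πinf s a = 1 := by
    intro s
    rw [Finset.sum_congr rfl fun a _ => hπinf s a, ← Finset.sum_div]
    exact div_self (ne_of_gt (hZpos s))
  have hlogπ : ∀ s a, Real.log (πinf s a) = qinf s a / lam - Real.log (Z s) := by
    intro s a
    rw [hπinf, Real.log_div (Real.exp_ne_zero _) (ne_of_gt (hZpos s)), Real.log_exp]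
  -- row sums of induced transition matrices
  have hrow : ∀ (π : S → A → ℝ), (∀ s', ∑ a, π s' a = 1) →
      ∀ s', ∑ t, (∑ a, π s' a * P a s' t) = 1 := by
    intro π hπ s'
    rw [Finset.sum_comm]
    have h : ∀ a, ∑ t, π s' a * P a s' t = π s' a := by
      intro a
      rw [← Finset.mul_sum, hP1, mul_one]
    rw [Finset.sum_congr rfl fun a _ => h a, hπ]
  have hnn : ∀ (π : S → A → ℝ), (∀ s' a, 0 ≤ π s' a) →
      ∀ s' t, 0 ≤ ∑ a, π s' a * P a s' t := by
    intro π hπ s' t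
    exact Finset.sum_nonneg fun a _ => mul_nonneg (hπ s' a) (hP0 a s' t)
  -- bound on u
  set U := (Fintype.card S : ℝ) / (1 - γ) with hUdef
  have hcol : ∀ t, ∑ s, (∑ a, πinf t a * P a t s) = 1 := fun t => hrow πinf hπ1 t
  have habs : ∀ s, |u s| ≤ 1 + γ * ∑ t, (∑ a, πinf t a * P a t s) * |u t| := by
    intro s
    have he : u s = 1 + γ * ∑ t, (∑ a, πinf t a * P a t s) * u t := by linarith [hu1 s]
    rw [he]
    have h1 : |1 + γ * ∑ t, (∑ a, πinf t a * P a t s) * u t|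
        ≤ 1 + |γ * ∑ t, (∑ a, πinf t a * P a t s) * u t| := by
      calc |1 + γ * ∑ t, (∑ a, πinf t a * P a t s) * u t|
          ≤ |(1:ℝ)| + |γ * ∑ t, (∑ a, πinf t a * P a t s) * u t| := abs_add_le _ _
        _ = 1 + |γ * ∑ t, (∑ a, πinf t a * P a t s) * u t| := by rw [abs_one]
    refine le_trans h1 ?_
    rw [abs_mul, abs_of_nonneg (le_of_lt hγ0)]
    have h2 : |∑ t, (∑ a, πinf t a * P a t s) * u t|
        ≤ ∑ t, (∑ a, πinf t a * P a t s) * |u t| := by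
      refine le_trans (Finset.abs_sum_le_sum_abs _ _) ?_
      refine le_of_eq (Finset.sum_congr rfl fun t _ => ?_)
      rw [abs_mul, abs_of_nonneg (hnn πinf hπ0 t s)]
    nlinarith [h2]
  have hsumu : ∑ s, |u s| ≤ U := by
    have h3 : ∑ s, |u s| ≤ (Fintype.card S : ℝ) + γ * ∑ t, |u t| := by
      calc ∑ s, |u s| ≤ ∑ s, (1 + γ * ∑ t, (∑ a, πinf t a * P a t s) * |u t|) :=
            Finset.sum_le_sum fun s _ => habs s
        _ = (Fintype.card S : ℝ) + γ * ∑ s, ∑ t, (∑ a, πinf t a * P a t s) * |u t| := by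
            rw [Finset.sum_add_distrib, ← Finset.mul_sum]
            simp [Finset.card_univ]
        _ = (Fintype.card S : ℝ) + γ * ∑ t, |u t| := by
            rw [Finset.sum_comm]
            have h4 : ∀ t, ∑ s, (∑ a, πinf t a * P a t s) * |u t| = |u t| := by
              intro t
              rw [← Finset.sum_mul, hcol, one_mul]
            rw [Finset.sum_congr rfl fun t _ => h4 t]
    rw [hUdef, le_div_iff₀ h1γ]
    nlinarith [h3]
  have hub : ∀ s, |u s| ≤ U := fun s =>
    le_trans (Finset.single_le_sum (f := fun t => |u t|) (fun t _ => abs_nonneg _)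
      (Finset.mem_univ s)) hsumu
  -- key identity : lam * log (Z s) = Vinf s - (1/β) u s
  have hid : ∀ s, lam * Real.log (Z s) = Vinf s - 1/β * u s := by
    intro s
    have hterm : ∀ a, πinf s a * qinf s a - lam * (πinf s a * Real.log (πinf s a))
        = πinf s a * (lam * Real.log (Z s)) := by
      intro a
      rw [hlogπ s a]
      field_simp
      ring
    have hsum := Finset.sum_congr rfl fun a (_ : a ∈ Finset.univ) => hterm a
    rw [Finset.sum_sub_distrib, ← Finset.mul_sum, ← Finset.sum_mul, hπ1 s, one_mul] at hsum
    have hq : ∑ a, πinf s a * qinf s a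
        = (∑ a, πinf s a * r s a) + γ * ∑ t, (∑ a, πinf s a * P a s t) * Vinf t := by
      have e : ∀ a, πinf s a * qinf s a = πinf s a * (r s a + γ * ∑ t, P a s t * Vinf t) :=
        fun a => by rw [hqinf s a]
      rw [Finset.sum_congr rfl fun a _ => e a]
      exact qsum19 P (fun a => πinf s a) (r s) Vinf γ s
    linarith [hu2 s, hsum, hq]
  -- Gibbs inequality relative to Vinf
  have hGib : ∀ (μ : A → ℝ), (∀ a, 0 ≤ μ a) → (∑ a, μ a = 1) → ∀ s,
      (∑ a, μ a * r s a) + γ * ∑ t, (∑ a, μ a * P a s t) * Vinf t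
        - lam * ∑ a, μ a * Real.log (μ a) ≤ Vinf s - 1/β * u s := by
    intro μ hμ0 hμ1 s
    have hg1 := gibbs19 (fun a => qinf s a) μ lam hlam hμ0 hμ1
    have e : ∀ a, μ a * qinf s a = μ a * (r s a + γ * ∑ t, P a s t * Vinf t) :=
      fun a => by rw [hqinf s a]
    rw [Finset.sum_congr rfl fun a _ => e a, qsum19 P μ (r s) Vinf γ s] at hg1
    have hZs : Z s = ∑ a, Real.exp (qinf s a / lam) := rfl
    rw [← hZs] at hg1
    linarith [hid s, hg1]
  -- contraction bounds
  have hD1 : ∀ s, Vinf s - Vsl s ≤ (U / β) / (1 - γ) := by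
    refine contract19 (fun s t => ∑ a, πinf s a * P a s t) (hnn πinf hπ0) (hrow πinf hπ1)
      γ (le_of_lt hγ0) hγ1 _ _ ?_
    intro s
    have hb := hoptSl πinf hπ0 hπ1 s
    have hbell := hbellSl s
    have hfixs := hu2 s
    have hsplit := sumsub19 (fun t => ∑ a, πinf s a * P a s t) Vinf Vsl
    have hsplitγ : γ * (∑ t, (∑ a, πinf s a * P a s t) * Vinf t)
        - γ * (∑ t, (∑ a, πinf s a * P a s t) * Vsl t)
        = γ * ∑ t, (∑ a, πinf s a * P a s t) * (Vinf t - Vsl t) := by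
      rw [← mul_sub, hsplit]
    have hus : 1/β * u s ≤ U/β := by
      have h5 : u s ≤ U := le_trans (le_abs_self _) (hub s)
      calc 1/β * u s ≤ 1/β * U := mul_le_mul_of_nonneg_left h5 (by positivity)
        _ = U/β := by ring
    linarith [hb, hbell, hfixs, hsplitγ, hus]
  have hD2 : ∀ s, Vsl s - Vinf s ≤ (U / β) / (1 - γ) := by
    refine contract19 (fun s t => ∑ a, πsl s a * P a s t) (hnn πsl hπsl0) (hrow πsl hπsl1)
      γ (le_of_lt hγ0) hγ1 _ _ ?_
    intro s
    have hb := hGib (fun a => πsl s a) (hπsl0 s) (hπsl1 s) s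
    have hbell := hbellSl s
    have hsplit := sumsub19 (fun t => ∑ a, πsl s a * P a s t) Vsl Vinf
    have hsplitγ : γ * (∑ t, (∑ a, πsl s a * P a s t) * Vsl t)
        - γ * (∑ t, (∑ a, πsl s a * P a s t) * Vinf t)
        = γ * ∑ t, (∑ a, πsl s a * P a s t) * (Vsl t - Vinf t) := by
      rw [← mul_sub, hsplit]
    have hus : -(1/β * u s) ≤ U/β := by
      have h5 : -u s ≤ U := le_trans (neg_le_abs _) (hub s)
      calc -(1/β * u s) = 1/β * (-u s) := by ring
        _ ≤ 1/β * U := mul_le_mul_of_nonneg_left h5 (by positivity)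
        _ = U/β := by ring
    linarith [hb, hbell, hsplitγ, hus]
  have hD3 : ∀ s, Vstar s - Vsl s ≤ 0 := by
    have h := contract19 (fun s t => ∑ a, πstar s a * P a s t) (hnn πstar hπstar0)
      (hrow πstar hπstar1) γ (le_of_lt hγ0) hγ1 (fun s => Vstar s - Vsl s) 0 ?_
    · intro s
      have := h s
      simpa using this
    · intro s
      show Vstar s - Vsl s ≤ γ * (∑ t, (∑ a, πstar s a * P a s t) * (Vstar t - Vsl t)) + 0
      have hb := hoptSl πstar hπstar0 hπstar1 s
      have hbell := hbellSl s
      have hbs := hbellStar s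
      have hent := entropy_ub19 (fun a => πstar s a) (hπstar0 s) (hπstar1 s)
      have hentlam : lam * ∑ a, πstar s a * Real.log (πstar s a) ≤ 0 :=
        mul_nonpos_of_nonneg_of_nonpos (le_of_lt hlam) hent
      have hsplit := sumsub19 (fun t => ∑ a, πstar s a * P a s t) Vstar Vsl
      have hsplitγ : γ * (∑ t, (∑ a, πstar s a * P a s t) * Vstar t)
          - γ * (∑ t, (∑ a, πstar s a * P a s t) * Vsl t)
          = γ * ∑ t, (∑ a, πstar s a * P a s t) * (Vstar t - Vsl t) := by
        rw [← mul_sub, hsplit]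
      linarith [hb, hbell, hbs, hentlam, hsplitγ]
  obtain ⟨W, hW⟩ := exists_value19 (fun s t => ∑ a, πsl s a * P a s t) (hnn πsl hπsl0)
    (hrow πsl hπsl1) γ (le_of_lt hγ0) hγ1 (fun s => ∑ a, πsl s a * r s a)
  have hWle : ∀ s, W s ≤ Vstar s :=
    hoptStar πsl hπsl0 hπsl1 W (fun s => by linarith [hW s])
  have hD4 : ∀ s, Vsl s - W s ≤ lam * L / (1 - γ) := by
    refine contract19 (fun s t => ∑ a, πsl s a * P a s t) (hnn πsl hπsl0) (hrow πsl hπsl1)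
      γ (le_of_lt hγ0) hγ1 _ _ ?_
    intro s
    have hbell := hbellSl s
    have hWs := hW s
    have hent := entropy_lb19 (fun a => πsl s a) (hπsl0 s) (hπsl1 s)
    have hentlam : lam * (-L) ≤ lam * ∑ a, πsl s a * Real.log (πsl s a) :=
      mul_le_mul_of_nonneg_left hent (le_of_lt hlam)
    have hentlam' : -(lam * L) ≤ lam * ∑ a, πsl s a * Real.log (πsl s a) := by
      linarith [hentlam, show lam * (-L) = -(lam * L) by ring]
    have hsplit := sumsub19 (fun t => ∑ a, πsl s a * P a s t) Vsl W
    have hsplitγ : γ * (∑ t, (∑ a, πsl s a * P a s t) * Vsl t)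
        - γ * (∑ t, (∑ a, πsl s a * P a s t) * W t)
        = γ * ∑ t, (∑ a, πsl s a * P a s t) * (Vsl t - W t) := by
      rw [← mul_sub, hsplit]
    linarith [hbell, hWs, hentlam', hsplitγ]
  -- total bound
  set δ := (U / β) / (1 - γ) + lam * L / (1 - γ) with hδdef
  have hU0 : 0 ≤ U := by positivity
  have hc2nn : 0 ≤ lam * L / (1 - γ) := by positivity
  have hc1nn : 0 ≤ (U / β) / (1 - γ) := by positivity
  have hVd : ∀ t, |Vinf t - Vstar t| ≤ δ := by
    intro t
    rw [abs_le]
    constructor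
    · rw [hδdef]
      linarith [hD3 t, hD2 t, hc2nn]
    · rw [hδdef]
      linarith [hD1 t, hD4 t, hWle t]
  have hδε : δ < ε := by
    have hc1 : (U / β) / (1 - γ) < ε / 2 := by
      have h2c : 2 * (Fintype.card S : ℝ) < β * (ε * (1 - γ)^2) := (div_lt_iff₀ hd).mp hβ
      have he : (U / β) / (1 - γ) = (Fintype.card S : ℝ) / (β * (1 - γ)^2) := by
        rw [hUdef]
        field_simp
      rw [he, div_lt_iff₀ (by positivity)]
      nlinarith
    have hc2 : lam * L / (1 - γ) < ε / 2 := by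
      have h2l : lam * (2 * L) < ε * (1 - γ) := (lt_div_iff₀ (by positivity)).mp hlamSmall
      rw [div_lt_iff₀ h1γ]
      nlinarith
    rw [hδdef]
    linarith
  -- conclusion
  intro s a hne
  have hane : a ∈ Finset.univ.erase (astar s) := Finset.mem_erase.mpr ⟨hne, Finset.mem_univ a⟩
  have h2 : qstar s a ≤ (Finset.univ.erase (astar s)).sup'
      ((Finset.erase_nonempty (Finset.mem_univ _)).mpr
        (Finset.one_lt_card_iff_nontrivial.mp (by rw [Finset.card_univ]; omega)))
      (qstar s) :=
    Finset.le_sup' _ hane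
  have h1 : g ≤ qstar s (astar s) - (Finset.univ.erase (astar s)).sup'
      ((Finset.erase_nonempty (Finset.mem_univ _)).mpr
        (Finset.one_lt_card_iff_nontrivial.mp (by rw [Finset.card_univ]; omega)))
      (qstar s) := by
    rw [hg]
    exact Finset.inf'_le _ (Finset.mem_univ s)
  have hgap : g ≤ qstar s (astar s) - qstar s a := by linarith
  have hX : ∀ b, |∑ t, P b s t * (Vinf t - Vstar t)| ≤ δ := by
    intro b
    refine le_trans (Finset.abs_sum_le_sum_abs _ _) ?_
    calc ∑ t, |P b s t * (Vinf t - Vstar t)| ≤ ∑ t, P b s t * δ := by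
          refine Finset.sum_le_sum fun t _ => ?_
          rw [abs_mul, abs_of_nonneg (hP0 b s t)]
          exact mul_le_mul_of_nonneg_left (hVd t) (hP0 b s t)
      _ = δ := by rw [← Finset.sum_mul, hP1, one_mul]
  have e : ∀ b, r s b + γ * ∑ t, P b s t * Vinf t
      = qstar s b + γ * ∑ t, P b s t * (Vinf t - Vstar t) := by
    intro b
    have hs := sumsub19 (fun t => P b s t) Vinf Vstar
    have hγs : γ * (∑ t, P b s t * Vinf t) - γ * (∑ t, P b s t * Vstar t)
        = γ * ∑ t, P b s t * (Vinf t - Vstar t) := by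
      rw [← mul_sub, hs]
    rw [hqstar]
    linarith [hγs]
  rw [e a, e (astar s)]
  have hXa := abs_le.mp (hX a)
  have hXb := abs_le.mp (hX (astar s))
  have g1 : γ * (∑ t, P a s t * (Vinf t - Vstar t)) ≤ γ * δ :=
    mul_le_mul_of_nonneg_left hXa.2 (le_of_lt hγ0)
  have g2 : γ * (-δ) ≤ γ * (∑ t, P (astar s) s t * (Vinf t - Vstar t)) :=
    mul_le_mul_of_nonneg_left hXb.1 (le_of_lt hγ0)
  have g3 : γ * δ ≤ δ := by nlinarith [hVd s, abs_nonneg (Vinf s - Vstar s)]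
  have g4 : γ * (-δ) = -(γ * δ) := by ring
  linarith [hgap, hgpos, hεg, hδε, g1, g2, g3, g4]
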